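/- Suppose the observability matrix 𝒪̃ of a linear quantum system factors as 𝒪̃ = Q E Z^{-1} with Q invertible, Z real symplectic, and E the one-sided symplectic SVD canonical form, and suppose the controllability matrix satisfies 𝒞̃ = 𝒪̃^♯ T₀ for some symplectic T₀. Then after the state transformation with V = Z^{-1}, the transformed observability matrix is Q E and the transformed controllability matrix is E^♯ Q^♯ T₀; consequently the unobservable subspace is Ker E = span{e_{k+l+1},...,e_n, e_{n+k+1},...,e_{2n}} and the controllable subspace is Im E^♯ = span{e₁,...,e_k, e_{n+1},...,e_{n+k+l}}. -/

import Mathlib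

open Matrix

/-- `J_{2k} = [[0, I_k], [-I_k, 0]]` as a `2k × 2k` real matrix. -/
noncomputable def JR (k : ℕ) : Matrix (Fin (2*k)) (Fin (2*k)) ℝ :=
  Matrix.of fun i j => if (j:ℕ) = (i:ℕ) + k then 1 else if (i:ℕ) = (j:ℕ) + k then -1 else 0

/-- The ♯-adjoint of a real `2r × 2s` matrix: `X^♯ = -J_{2s} X^⊤ J_{2r}`
(for real matrices `X^† = X^⊤`). -/
noncomputable def sharpR {r s : ℕ} (X : Matrix (Fin (2*r)) (Fin (2*s)) ℝ) :
    Matrix (Fin (2*s)) (Fin (2*r)) ℝ :=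
  -(JR s) * Xᵀ * (JR r)

/-- The canonical form `E` of the one-sided symplectic SVD: nonzero blocks
`Ξ_k = diag(ξ₁,…,ξ_k)` in rows `1..k`, columns `1..k`; `I_l` in rows `k+1..k+l`,
columns `k+1..k+l`; `Ξ_k` in rows `k+l+1..2k+l`, columns `n+1..n+k`; zeros elsewhere. -/
noncomputable def Ecan (s n k l : ℕ) (ξ : Fin k → ℝ) : Matrix (Fin s) (Fin (2*n)) ℝ :=
  Matrix.of fun i j =>
    if h : (i : ℕ) < k ∧ (j : ℕ) = (i : ℕ) then ξ ⟨i, h.1⟩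
    else if k ≤ (i : ℕ) ∧ (i : ℕ) < k + l ∧ (j : ℕ) = (i : ℕ) then 1
    else if h2 : k + l ≤ (i : ℕ) ∧ (i : ℕ) < 2*k + l ∧ (j : ℕ) = n + ((i : ℕ) - (k + l)) then
      ξ ⟨(i : ℕ) - (k + l), by omega⟩
    else 0

/-!
After the change of variables both identities are formal: `♯` is an anti-multiplicative
involution, and `Z^♯ = Z⁻¹` for symplectic `Z`. Since `Q` and `Q^♯ T₀` are invertible,
`Ker (Q E) = Ker E` and `Im (E^♯ Q^♯ T₀) = Im E^♯`. The columns of `E` outside its support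
vanish, and every standard basis vector indexed by the support is a nonzero multiple of a row
of `E`. This makes `Ker E` the coordinate subspace of the complementary indices, and, because
`E^♯ = -J Eᵀ J` where `J` is a signed permutation exchanging the `q`- and `p`-halves, it makes
`Im E^♯` the coordinate subspace of the swapped support.
-/

section CoordinateSubspaces

variable {K m n : Type*} [Fintype n] [DecidableEq n]

lemma mem_span_single_image_iff [Semiring K] (P : Set n) (v : n → K) :
    v ∈ Submodule.span K ((fun i : n => (Pi.single i 1 : n → K)) '' P) ↔ ∀ j ∉ P, v j = 0 := by
  constructor
  · intro hv
    induction hv using Submodule.span_induction with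
    | mem x hx =>
      obtain ⟨i, hi, rfl⟩ := hx
      exact fun j hj => Pi.single_eq_of_ne (by rintro rfl; exact hj hi) 1
    | zero => exact fun _ _ => rfl
    | add x y _ _ hx hy => exact fun j hj => by simp [hx j hj, hy j hj]
    | smul a x _ hx => exact fun j hj => by simp [hx j hj]
  · intro hv
    rw [← Finset.univ_sum_single v]
    refine Submodule.sum_mem _ fun j _ => ?_
    by_cases hj : j ∈ P
    · rw [← mul_one (v j), ← smul_eq_mul, Pi.single_smul']
      exact Submodule.smul_mem _ _ (Submodule.subset_span ⟨j, hj, rfl⟩)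
    · simp [hv j hj]

lemma ker_toLin'_mul_of_isUnit [Field K] [Fintype m] [DecidableEq m] {Q : Matrix m m K}
    (hQ : IsUnit Q) (A : Matrix m n K) :
    LinearMap.ker (Matrix.toLin' (Q * A)) = LinearMap.ker (Matrix.toLin' A) := by
  rw [Matrix.toLin'_mul]
  exact LinearMap.ker_comp_of_ker_eq_bot _
    (LinearMap.ker_eq_bot_of_injective (Matrix.mulVec_injective_iff_isUnit.mpr hQ))

lemma range_toLin'_mul_of_isUnit [CommRing K] [Fintype m] {U : Matrix n n K} (hU : IsUnit U)
    (A : Matrix m n K) :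
    LinearMap.range (Matrix.toLin' (A * U)) = LinearMap.range (Matrix.toLin' A) := by
  rw [Matrix.toLin'_mul]
  exact LinearMap.range_comp_of_range_eq_top _
    (LinearMap.range_eq_top_of_surjective _ (Matrix.mulVec_surjective_iff_isUnit.mpr hU))

lemma ker_toLin'_eq_span_single_compl [Field K] [Fintype m] {A : Matrix m n K} {P : Set n}
    (hcol : ∀ i, ∀ j ∉ P, A i j = 0) (hrow : ∀ j ∈ P, ∃ i c, c ≠ 0 ∧ A i = Pi.single j c) :
    LinearMap.ker (Matrix.toLin' A) =
      Submodule.span K ((fun i : n => (Pi.single i 1 : n → K)) '' Pᶜ) := by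
  ext v
  rw [LinearMap.mem_ker, Matrix.toLin'_apply, mem_span_single_image_iff]
  simp only [Set.mem_compl_iff, not_not]
  constructor
  · intro hv j hj
    obtain ⟨i, c, hc, hi⟩ := hrow j hj
    have hvi : A i ⬝ᵥ v = 0 := congrFun hv i
    rw [hi, single_dotProduct] at hvi
    exact (mul_eq_zero.mp hvi).resolve_left hc
  · intro hv
    funext i
    refine Finset.sum_eq_zero fun j _ => show A i j * v j = 0 from ?_
    by_cases hj : j ∈ P
    · rw [hv j hj, mul_zero]
    · rw [hcol i j hj, zero_mul]

end CoordinateSubspaces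

section Symplectic

def swapHalves {k : ℕ} (i : Fin (2*k)) : Fin (2*k) :=
  if h : (i : ℕ) < k then ⟨i + k, by omega⟩ else ⟨i - k, by omega⟩

lemma swapHalves_val {k : ℕ} (i : Fin (2*k)) :
    (swapHalves i : ℕ) = if (i : ℕ) < k then (i : ℕ) + k else (i : ℕ) - k := by
  unfold swapHalves
  split_ifs <;> rfl

lemma swapHalves_swapHalves {k : ℕ} (i : Fin (2*k)) : swapHalves (swapHalves i) = i := by
  ext
  rw [swapHalves_val, swapHalves_val]
  split_ifs <;> omega

lemma JR_row {k : ℕ} (i : Fin (2*k)) :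
    JR k i = Pi.single (swapHalves i) (if (i : ℕ) < k then 1 else -1) := by
  funext j
  simp only [JR, Matrix.of_apply, Pi.single_apply, Fin.ext_iff, swapHalves_val]
  split_ifs <;> first | rfl | (exfalso; omega)

lemma JR_mulVec_apply {k : ℕ} (v : Fin (2*k) → ℝ) (i : Fin (2*k)) :
    (JR k *ᵥ v) i = (if (i : ℕ) < k then 1 else -1) * v (swapHalves i) := by
  rw [mulVec, JR_row, single_dotProduct]

lemma JR_mulVec_single {k : ℕ} (i : Fin (2*k)) (c : ℝ) :
    JR k *ᵥ Pi.single (swapHalves i) c = Pi.single i ((if (i : ℕ) < k then 1 else -1) * c) := by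
  funext j
  simp only [JR_mulVec_apply, Pi.single_apply,
    (Function.LeftInverse.injective swapHalves_swapHalves).eq_iff]
  split_ifs <;> simp_all

lemma JR_mul_JR (k : ℕ) : JR k * JR k = -1 := by
  ext i j
  rw [mul_apply', JR_row, single_dotProduct]
  change _ * JR k (swapHalves i) j = _
  rw [JR_row, swapHalves_swapHalves, neg_apply, one_apply, Pi.single_apply, swapHalves_val]
  simp only [Fin.ext_iff]
  split_ifs <;> first | (norm_num; done) | (exfalso; omega)

lemma JR_transpose (k : ℕ) : (JR k)ᵀ = -JR k := by
  ext i j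
  simp only [transpose_apply, Matrix.neg_apply, JR_row, Pi.single_apply, Fin.ext_iff,
    swapHalves_val]
  have := i.2
  have := j.2
  split_ifs <;> first | (norm_num; done) | (exfalso; omega)

lemma sharpR_mul {r t s : ℕ} (A : Matrix (Fin (2*r)) (Fin (2*t)) ℝ)
    (B : Matrix (Fin (2*t)) (Fin (2*s)) ℝ) : sharpR (A * B) = sharpR B * sharpR A := by
  simp only [sharpR, transpose_mul, Matrix.neg_mul, Matrix.mul_neg, neg_neg, Matrix.mul_assoc]
  rw [← Matrix.mul_assoc (JR t) (JR t), JR_mul_JR]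
  simp

lemma sharpR_one (k : ℕ) : sharpR (1 : Matrix (Fin (2*k)) (Fin (2*k)) ℝ) = 1 := by
  simp [sharpR, JR_mul_JR]

lemma sharpR_sharpR {r s : ℕ} (A : Matrix (Fin (2*r)) (Fin (2*s)) ℝ) : sharpR (sharpR A) = A := by
  simp only [sharpR, transpose_mul, transpose_neg, transpose_transpose, JR_transpose,
    Matrix.neg_mul, Matrix.mul_neg, neg_neg, Matrix.mul_assoc]
  rw [JR_mul_JR, ← Matrix.mul_assoc, JR_mul_JR]
  simp

lemma isUnit_sharpR {k : ℕ} {Q : Matrix (Fin (2*k)) (Fin (2*k)) ℝ} (hQ : IsUnit Q) :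
    IsUnit (sharpR Q) := by
  have hdet : IsUnit Q.det := (isUnit_iff_isUnit_det Q).mp hQ
  refine (isUnit_iff_isUnit_det _).mpr (isUnit_det_of_right_inverse (B := sharpR Q⁻¹) ?_)
  rw [← sharpR_mul, nonsing_inv_mul Q hdet, sharpR_one]

lemma mul_sharpR_of_symplectic {k : ℕ} {Z : Matrix (Fin (2*k)) (Fin (2*k)) ℝ}
    (hZ : Z * JR k * Zᵀ = JR k) : Z * sharpR Z = 1 := by
  simp only [sharpR, Matrix.neg_mul, Matrix.mul_neg, ← Matrix.mul_assoc]
  rw [hZ, JR_mul_JR, neg_neg]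

lemma isUnit_of_symplectic {k : ℕ} {Z : Matrix (Fin (2*k)) (Fin (2*k)) ℝ}
    (hZ : Z * JR k * Zᵀ = JR k) : IsUnit Z :=
  (isUnit_iff_isUnit_det Z).mpr (isUnit_det_of_right_inverse (mul_sharpR_of_symplectic hZ))

lemma sharpR_inv_of_symplectic {k : ℕ} {Z : Matrix (Fin (2*k)) (Fin (2*k)) ℝ}
    (hZ : Z * JR k * Zᵀ = JR k) : sharpR Z⁻¹ = Z := by
  rw [inv_eq_right_inv (mul_sharpR_of_symplectic hZ), sharpR_sharpR]

lemma sharpR_mulVec {r s : ℕ} (A : Matrix (Fin (2*r)) (Fin (2*s)) ℝ) (v : Fin (2*r) → ℝ) :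
    sharpR A *ᵥ v = -(JR s *ᵥ (Aᵀ *ᵥ (JR r *ᵥ v))) := by
  simp only [sharpR, mulVec_mulVec, Matrix.neg_mul, neg_mulVec, Matrix.mul_assoc]

lemma range_toLin'_sharpR {r s : ℕ} {A : Matrix (Fin (2*r)) (Fin (2*s)) ℝ} {P : Set (Fin (2*s))}
    (hcol : ∀ i, ∀ j ∉ P, A i j = 0) (hrow : ∀ j ∈ P, ∃ i c, c ≠ 0 ∧ A i = Pi.single j c) :
    LinearMap.range (Matrix.toLin' (sharpR A)) =
      Submodule.span ℝ ((fun i => (Pi.single i 1 : Fin (2*s) → ℝ)) '' (swapHalves ⁻¹' P)) := by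
  apply le_antisymm
  · rintro _ ⟨v, rfl⟩
    rw [mem_span_single_image_iff]
    intro j hj
    have hAT : (Aᵀ *ᵥ (JR r *ᵥ v)) (swapHalves j) = 0 := by
      simp only [mulVec, dotProduct, transpose_apply]
      exact Finset.sum_eq_zero fun i _ => by rw [hcol i _ hj, zero_mul]
    rw [Matrix.toLin'_apply, sharpR_mulVec, Pi.neg_apply, JR_mulVec_apply, hAT, mul_zero, neg_zero]
  · rw [Submodule.span_le]
    rintro _ ⟨j, hj, rfl⟩
    obtain ⟨i, c, hc, hi⟩ := hrow _ hj
    set a : ℝ := (if (j : ℕ) < s then 1 else -1) * c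
    have ha : a ≠ 0 := mul_ne_zero (by split_ifs <;> norm_num) hc
    -- `J² = -1` turns `A^♯ (J eᵢ)` into `J Aᵀ eᵢ = J (row i of A)`
    have hAJ : sharpR A *ᵥ (JR r *ᵥ Pi.single i 1) = Pi.single j a := by
      rw [sharpR_mulVec, mulVec_mulVec _ (JR r) (JR r), JR_mul_JR, neg_mulVec, one_mulVec,
        mulVec_neg, mulVec_single_one, col_transpose, mulVec_neg, neg_neg]
      exact (congrArg (JR s *ᵥ ·) hi).trans (JR_mulVec_single j c)
    refine ⟨a⁻¹ • (JR r *ᵥ Pi.single i 1), ?_⟩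
    rw [Matrix.toLin'_apply, mulVec_smul, hAJ, ← Pi.single_smul', smul_eq_mul, inv_mul_cancel₀ ha]

end Symplectic

section CanonicalForm

def EcanSupport (n k l : ℕ) : Set (Fin (2*n)) :=
  {j | (j : ℕ) < k + l ∨ (n ≤ (j : ℕ) ∧ (j : ℕ) < n + k)}

variable {s n k l : ℕ} {ξ : Fin k → ℝ}

lemma Ecan_apply_of_notMem (i : Fin s) {j : Fin (2*n)} (hj : j ∉ EcanSupport n k l) :
    Ecan s n k l ξ i j = 0 := by
  simp only [EcanSupport, Set.mem_ofPred_eq] at hj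
  simp only [Ecan, Matrix.of_apply]
  split_ifs <;> first | rfl | (exfalso; omega)

lemma exists_Ecan_row_eq_single (hξ : ∀ i, ξ i ≠ 0) (hs : 2*k + l ≤ s) {j : Fin (2*n)}
    (hj : j ∈ EcanSupport n k l) : ∃ i c, c ≠ 0 ∧ Ecan s n k l ξ i = Pi.single j c := by
  have hj2 := j.2
  rcases hj with hjkl | ⟨hnj, hjnk⟩
  · by_cases hjk : (j : ℕ) < k
    · refine ⟨⟨j, by omega⟩, ξ ⟨j, hjk⟩, hξ _, funext fun j' => ?_⟩
      simp only [Ecan, Matrix.of_apply, Pi.single_apply, Fin.ext_iff]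
      split_ifs <;> first | rfl | (exfalso; omega)
    · refine ⟨⟨j, by omega⟩, 1, one_ne_zero, funext fun j' => ?_⟩
      simp only [Ecan, Matrix.of_apply, Pi.single_apply, Fin.ext_iff]
      split_ifs <;> first | rfl | (exfalso; omega)
  · refine ⟨⟨k + l + (j - n), by omega⟩, ξ ⟨j - n, by omega⟩, hξ _, funext fun j' => ?_⟩
    simp only [Ecan, Matrix.of_apply, Pi.single_apply, Fin.ext_iff]
    split_ifs <;> first | (exfalso; omega) | rfl | (congr 1; ext; simp only; omega)

end CanonicalForm

/-- Suppose the observability matrix factors as `𝒪̃ = Q E Z⁻¹` (`Q` invertible, `Z` real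
symplectic, `E` the one-sided symplectic SVD canonical form), and the controllability
matrix satisfies `𝒞̃ = 𝒪̃^♯ T₀` with `T₀` symplectic. After the state transformation
`V = Z⁻¹`, the observability matrix becomes `Q E` and the controllability matrix becomes
`E^♯ Q^♯ T₀`; the unobservable subspace is `Ker E = span{e_{k+l+1},…,e_n,
e_{n+k+1},…,e_{2n}}` and the controllable subspace is `Im E^♯ = span{e₁,…,e_k,
e_{n+1},…,e_{n+k+l}}`. -/
theorem kalman_structure {n m k l : ℕ} (hkl : k + l ≤ n) (hs : 2*k + l ≤ 2*(2*n*m))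
    (ξ : Fin k → ℝ) (hξ : ∀ i, 0 < ξ i)
    (Otil : Matrix (Fin (2*(2*n*m))) (Fin (2*n)) ℝ)
    (Ctil : Matrix (Fin (2*n)) (Fin (2*(2*n*m))) ℝ)
    (Q : Matrix (Fin (2*(2*n*m))) (Fin (2*(2*n*m))) ℝ) (hQ : IsUnit Q)
    (Z : Matrix (Fin (2*n)) (Fin (2*n)) ℝ) (hZ : Z * JR n * Zᵀ = JR n)
    (T₀ : Matrix (Fin (2*(2*n*m))) (Fin (2*(2*n*m))) ℝ)
    (hT₀ : T₀ * JR (2*n*m) * T₀ᵀ = JR (2*n*m))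
    (hO : Otil = Q * Ecan (2*(2*n*m)) n k l ξ * Z⁻¹)
    (hC : Ctil = sharpR Otil * T₀) :
    Otil * Z = Q * Ecan (2*(2*n*m)) n k l ξ ∧
    Z⁻¹ * Ctil = sharpR (Ecan (2*(2*n*m)) n k l ξ) * sharpR Q * T₀ ∧
    LinearMap.ker (Matrix.toLin' (Q * Ecan (2*(2*n*m)) n k l ξ)) =
      Submodule.span ℝ ((fun i : Fin (2*n) => (Pi.single i 1 : Fin (2*n) → ℝ)) ''
        {i : Fin (2*n) | (k + l ≤ (i : ℕ) ∧ (i : ℕ) < n) ∨ n + k ≤ (i : ℕ)}) ∧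
    LinearMap.range (Matrix.toLin'
        (sharpR (Ecan (2*(2*n*m)) n k l ξ) * sharpR Q * T₀)) =
      Submodule.span ℝ ((fun i : Fin (2*n) => (Pi.single i 1 : Fin (2*n) → ℝ)) ''
        {i : Fin (2*n) | (i : ℕ) < k ∨ (n ≤ (i : ℕ) ∧ (i : ℕ) < n + k + l)}) := by
  have hZinv : Z⁻¹ * Z = 1 :=
    nonsing_inv_mul Z ((isUnit_iff_isUnit_det Z).mp (isUnit_of_symplectic hZ))
  have hcol : ∀ i, ∀ j ∉ EcanSupport n k l, Ecan (2*(2*n*m)) n k l ξ i j = 0 :=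
    fun i _ hj => Ecan_apply_of_notMem i hj
  have hrow : ∀ j ∈ EcanSupport n k l, ∃ i c, c ≠ 0 ∧ Ecan (2*(2*n*m)) n k l ξ i = Pi.single j c :=
    fun _ hj => exists_Ecan_row_eq_single (fun i => (hξ i).ne') hs hj
  refine ⟨?_, ?_, ?_, ?_⟩
  · rw [hO, Matrix.mul_assoc, hZinv, Matrix.mul_one]
  · rw [hC, hO, sharpR_mul, sharpR_mul, sharpR_inv_of_symplectic hZ, ← Matrix.mul_assoc,
      ← Matrix.mul_assoc, hZinv, Matrix.one_mul, Matrix.mul_assoc]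
  · rw [ker_toLin'_mul_of_isUnit hQ, ker_toLin'_eq_span_single_compl hcol hrow]
    congr 2
    ext j
    simp only [EcanSupport, Set.mem_compl_iff, Set.mem_ofPred_eq]
    omega
  · rw [Matrix.mul_assoc,
      range_toLin'_mul_of_isUnit ((isUnit_sharpR hQ).mul (isUnit_of_symplectic hT₀)),
      range_toLin'_sharpR hcol hrow]
    congr 2
    ext j
    have := j.2
    simp only [EcanSupport, Set.mem_preimage, Set.mem_ofPred_eq, swapHalves_val]
    split_ifs <;> omega
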